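/- arXiv:2101.06404 — 5 statements merged into one kernel-verified Lean document; each statement's English description precedes it below -/
import Mathlib

section
/- Let β > 0 be real, ℓ ≥ 1 and q natural numbers. Let p₀ : ℝ^ℓ → ℝ be a polynomial function which is homogeneous of degree q, and define inductively p_{j+1} = −((2j+2)(2j+2+β))^{−1} Δ_y p_j, where Δ_y is the Laplacian in the variables y ∈ ℝ^ℓ. Then each p_j is a polynomial function homogeneous of degree q − 2j (identically zero when 2j > q), and the function h(r, y) = ∑_{0 ≤ j ≤ q/2} r^{2j} p_j(y) on ℝ × ℝ^ℓ is positively homogeneous of degree q (h(t·(r,y)) = t^q h(r,y) for t > 0) and satisfies the β-Laplace equation r^{−(1+β)} ∂_r(r^{1+β} ∂_r h) + Δ_y h = 0 at every point with r > 0. -/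
/-!
Scaling commutes with each partial derivative up to a factor `t`, so `Δ_y` lowers the degree of
positive homogeneity by two, and `p_j` is homogeneous of degree `q - 2j`. A continuous function
that is positively homogeneous of negative degree vanishes (let `t → 0⁺` in
`f y = t ^ (-d) * f (t • y)`), hence `p_j = 0` once `2j > q`.

The radial operator `r^{-(1+β)} ∂_r (r^{1+β} ∂_r ·)` sends `r^{2j}` to `2j(2j+β) r^{2j-2}`, and
the recursion defining `p_{j+1}` is chosen so that these terms cancel `r^{2j} Δ_y p_j` one by
one; the last `Δ_y` term is `r^{2m} Δ_y p_m` with `m = q/2`, which is a multiple of `p_{m+1} = 0`.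
-/

noncomputable section

/-- Partial derivative in the radial variable `r` of a function on `ℝ × ℝ^ℓ`. -/
def pr {ℓ : ℕ} (f : ℝ × (Fin ℓ → ℝ) → ℝ) (p : ℝ × (Fin ℓ → ℝ)) : ℝ :=
  deriv (fun s : ℝ => f (s, p.2)) p.1

/-- Partial derivative in the variable `y_j` of a function on `ℝ × ℝ^ℓ`. -/
def py {ℓ : ℕ} (j : Fin ℓ) (f : ℝ × (Fin ℓ → ℝ) → ℝ) (p : ℝ × (Fin ℓ → ℝ)) : ℝ :=
  deriv (fun t : ℝ => f (p.1, Function.update p.2 j t)) (p.2 j)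

/-- Laplacian in the `y`-variables of a function on `ℝ × ℝ^ℓ`. -/
def lapy {ℓ : ℕ} (f : ℝ × (Fin ℓ → ℝ) → ℝ) (p : ℝ × (Fin ℓ → ℝ)) : ℝ :=
  ∑ j : Fin ℓ, py j (py j f) p

/-- Partial derivative in `y_j` of a function on `ℝ^ℓ`. -/
def pdY {ℓ : ℕ} (j : Fin ℓ) (f : (Fin ℓ → ℝ) → ℝ) (y : Fin ℓ → ℝ) : ℝ :=
  deriv (fun t : ℝ => f (Function.update y j t)) (y j)

/-- Laplacian of a function on `ℝ^ℓ`. -/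
def lapY {ℓ : ℕ} (f : (Fin ℓ → ℝ) → ℝ) (y : Fin ℓ → ℝ) : ℝ :=
  ∑ j : Fin ℓ, pdY j (pdY j f) y

open MvPolynomial Filter Topology

def PosHomogeneous {E : Type*} [SMul ℝ E] (f : E → ℝ) (d : ℤ) : Prop :=
  ∀ t : ℝ, 0 < t → ∀ y, f (t • y) = t ^ d * f y

namespace PosHomogeneous

variable {d : ℤ}

lemma const_mul {E : Type*} [SMul ℝ E] {f : E → ℝ} (hf : PosHomogeneous f d) (c : ℝ) :
    PosHomogeneous (fun y => c * f y) d :=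
  fun t ht y => by simp only [hf t ht y]; ring

lemma eq_zero_of_neg {E : Type*} [AddCommGroup E] [Module ℝ E] [TopologicalSpace E]
    [ContinuousSMul ℝ E] {f : E → ℝ} (hf : PosHomogeneous f d) (hcont : ContinuousAt f 0)
    (hd : d < 0) (y : E) : f y = 0 := by
  obtain ⟨n, hn⟩ : ∃ n : ℕ, -d = n + 1 := ⟨(-d - 1).toNat, by omega⟩
  have hscale : ∀ t : ℝ, 0 < t → t ^ (n + 1) * f (t • y) = f y := fun t ht => by
    rw [hf t ht y, ← mul_assoc, ← zpow_natCast, ← zpow_add₀ ht.ne']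
    simp [← hn]
  have hsmul : Tendsto (fun t : ℝ => t • y) (𝓝[>] 0) (𝓝 0) :=
    ((continuous_id.smul continuous_const).tendsto' 0 0 (zero_smul ℝ y)).mono_left
      nhdsWithin_le_nhds
  have hlim : Tendsto (fun t : ℝ => t ^ (n + 1) * f (t • y)) (𝓝[>] 0)
      (𝓝 (0 ^ (n + 1) * f 0)) :=
    (((continuous_pow _).tendsto 0).mono_left nhdsWithin_le_nhds).mul
      (hcont.tendsto.comp hsmul)
  rw [zero_pow n.succ_ne_zero, zero_mul] at hlim
  have hconst : (fun _ : ℝ => f y) =ᶠ[𝓝[>] 0] fun t => t ^ (n + 1) * f (t • y) :=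
    eventually_nhdsWithin_of_forall fun t (ht : 0 < t) => (hscale t ht).symm
  exact tendsto_nhds_unique (tendsto_const_nhds.congr' hconst) hlim

variable {ℓ : ℕ} {f : (Fin ℓ → ℝ) → ℝ}

lemma pdY (hf : PosHomogeneous f d) (j : Fin ℓ) : PosHomogeneous (pdY j f) (d - 1) := by
  intro t ht y
  have hupdate : ∀ s, Function.update (t • y) j (t * s) = t • Function.update y j s := by
    intro s
    rw [← Function.update_smul, smul_eq_mul]
  have key : t * _root_.pdY j f (t • y) = t ^ d * _root_.pdY j f y := by
    calc t * _root_.pdY j f (t • y)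
        = deriv (fun s => f (Function.update (t • y) j (t * s))) (y j) := by
          rw [deriv_comp_mul_left (f := fun u => f (Function.update (t • y) j u)), smul_eq_mul]
          rfl
      _ = deriv (fun s => t ^ d * f (Function.update y j s)) (y j) := by
          simp only [hupdate, hf t ht]
      _ = t ^ d * _root_.pdY j f y := by rw [deriv_const_mul_field']; rfl
  rw [zpow_sub_one₀ ht.ne', mul_right_comm, ← key]
  field_simp

lemma lapY (hf : PosHomogeneous f d) : PosHomogeneous (lapY f) (d - 2) := by
  intro t ht y
  have h : ∀ j, PosHomogeneous (_root_.pdY j (_root_.pdY j f)) (d - 2) := fun j => by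
    simpa [sub_sub, one_add_one_eq_two] using (hf.pdY j).pdY j
  simp only [_root_.lapY, Finset.mul_sum, h _ t ht y]

end PosHomogeneous

namespace MvPolynomial

variable {σ R : Type*} [CommSemiring R]

def laplacian [Fintype σ] : MvPolynomial σ R →ₗ[R] MvPolynomial σ R :=
  ∑ i : σ, (pderiv i).toLinearMap ∘ₗ (pderiv i).toLinearMap

lemma laplacian_apply [Fintype σ] (P : MvPolynomial σ R) :
    laplacian P = ∑ i : σ, pderiv i (pderiv i P) := by
  simp [laplacian]

lemma hasDerivAt_eval_update {𝕜 : Type*} [NontriviallyNormedField 𝕜] [DecidableEq σ]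
    (P : MvPolynomial σ 𝕜) (j : σ) (y : σ → 𝕜) (t : 𝕜) :
    HasDerivAt (fun s => eval (Function.update y j s) P)
      (eval (Function.update y j t) (pderiv j P)) t := by
  induction P using MvPolynomial.induction_on with
  | C a => simpa using hasDerivAt_const t a
  | add P Q hP hQ => simpa using hP.fun_add hQ
  | mul_X P i hP =>
    rcases eq_or_ne i j with rfl | hij
    · simp only [pderiv_mul, pderiv_X_self, map_add, map_mul, eval_X, Function.update_self,
        mul_one]
      exact (hP.fun_mul (hasDerivAt_id' t)).congr_deriv (by ring)
    · simp only [pderiv_mul, pderiv_X_of_ne hij, map_mul, eval_X, Function.update_of_ne hij,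
        mul_zero, add_zero]
      exact hP.mul_const (y i)

end MvPolynomial

section PolynomialFunctions

variable {ℓ : ℕ}

lemma pdY_eval (P : MvPolynomial (Fin ℓ) ℝ) (j : Fin ℓ) :
    pdY j (fun y => eval y P) = fun y => eval y (pderiv j P) := by
  funext y
  simpa [pdY] using (hasDerivAt_eval_update P j y (y j)).deriv

lemma lapY_eval (P : MvPolynomial (Fin ℓ) ℝ) :
    lapY (fun y => eval y P) = fun y => eval y (laplacian P) := by
  funext y
  simp only [lapY, pdY_eval, laplacian_apply, map_sum]

lemma lapY_sum_mul {ι : Type*} (s : Finset ι) (a : ι → ℝ) {f : ι → (Fin ℓ → ℝ) → ℝ}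
    (hf : ∀ j, ∃ P : MvPolynomial (Fin ℓ) ℝ, ∀ y, f j y = eval y P) (y : Fin ℓ → ℝ) :
    lapY (fun y => ∑ j ∈ s, a j * f j y) y = ∑ j ∈ s, a j * lapY (f j) y := by
  choose Q hQ using hf
  obtain rfl : f = fun j y => eval y (Q j) := funext fun j => funext (hQ j)
  have h : (fun y => ∑ j ∈ s, a j * eval y (Q j)) = fun y => eval y (∑ j ∈ s, a j • Q j) := by
    simp [smul_eval]
  simp [h, lapY_eval, smul_eval]

end PolynomialFunctions

open Finset in
lemma deriv_sum_pow_two_mul (c : ℕ → ℝ) (m : ℕ) (s : ℝ) :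
    deriv (fun s => ∑ j ∈ range (m + 1), s ^ (2 * j) * c j) s
      = ∑ j ∈ range m, (2 * j + 2) * s ^ (2 * j + 1) * c (j + 1) := by
  simp_rw [sum_range_succ' _ m, mul_zero, pow_zero, one_mul]
  refine (HasDerivAt.add_const (c 0) (HasDerivAt.fun_sum fun j _ =>
    (hasDerivAt_pow (2 * (j + 1)) s).mul_const (c (j + 1)))).deriv.trans ?_
  refine sum_congr rfl fun j _ => ?_
  rw [show 2 * (j + 1) - 1 = 2 * j + 1 by omega]
  push_cast
  ring

open Finset in
lemma radial_sum_pow_two_mul (β : ℝ) (c : ℕ → ℝ) (m : ℕ) {r : ℝ} (hr : 0 < r) :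
    r ^ (-(1 + β)) *
        deriv (fun s => s ^ (1 + β) * deriv (fun s => ∑ j ∈ range (m + 1), s ^ (2 * j) * c j) s) r
      = ∑ j ∈ range m, (2 * j + 2) * (2 * j + 2 + β) * r ^ (2 * j) * c (j + 1) := by
  have hflux : (fun s => s ^ (1 + β) * deriv (fun s => ∑ j ∈ range (m + 1), s ^ (2 * j) * c j) s)
      =ᶠ[𝓝 r] fun s => ∑ j ∈ range m, (2 * j + 2) * c (j + 1) * s ^ (2 * j + 2 + β) := by
    filter_upwards [Ioi_mem_nhds hr] with s hs
    rw [deriv_sum_pow_two_mul, mul_sum]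
    refine sum_congr rfl fun j _ => ?_
    rw [← Real.rpow_natCast, show 2 * (j : ℝ) + 2 + β = 1 + β + ((2 * j + 1 : ℕ) : ℝ) by
      push_cast; ring, Real.rpow_add hs (1 + β)]
    ring
  have hderiv : HasDerivAt (fun s => ∑ j ∈ range m, (2 * j + 2) * c (j + 1) * s ^ (2 * j + 2 + β))
      (∑ j ∈ range m, (2 * j + 2) * c (j + 1) * ((2 * j + 2 + β) * r ^ (2 * j + 2 + β - 1))) r :=
    HasDerivAt.fun_sum fun j _ =>
      (Real.hasDerivAt_rpow_const (Or.inl hr.ne')).const_mul ((2 * j + 2) * c (j + 1))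
  rw [hflux.deriv_eq, hderiv.deriv, mul_sum]
  refine sum_congr rfl fun j _ => ?_
  have hpow : r ^ (-(1 + β)) * r ^ (2 * (j : ℝ) + 2 + β - 1) = r ^ (2 * j) := by
    rw [← Real.rpow_add hr, ← Real.rpow_natCast]
    push_cast
    ring_nf
  linear_combination (2 * j + 2) * c (j + 1) * (2 * j + 2 + β) * hpow

section LaplacianRecursion

variable {ℓ : ℕ} {p : ℕ → (Fin ℓ → ℝ) → ℝ}

lemma exists_eval_eq_of_lapY_rec (c : ℕ → ℝ)
    (hrec : ∀ j : ℕ, p (j + 1) = fun y => c j * lapY (p j) y)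
    (hp0 : ∃ P : MvPolynomial (Fin ℓ) ℝ, ∀ y, p 0 y = eval y P) (j : ℕ) :
    ∃ P : MvPolynomial (Fin ℓ) ℝ, ∀ y, p j y = eval y P := by
  induction j with
  | zero => exact hp0
  | succ j ih =>
    obtain ⟨P, hP⟩ := ih
    refine ⟨c j • laplacian P, fun y => ?_⟩
    rw [hrec j, funext hP, lapY_eval, smul_eval]

lemma posHomogeneous_of_lapY_rec (c : ℕ → ℝ)
    (hrec : ∀ j : ℕ, p (j + 1) = fun y => c j * lapY (p j) y) {d : ℤ}
    (hp0 : PosHomogeneous (p 0) d) (j : ℕ) : PosHomogeneous (p j) (d - 2 * j) := by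
  induction j with
  | zero => simpa using hp0
  | succ j ih =>
    rw [hrec j]
    convert ih.lapY.const_mul (c j) using 1
    push_cast
    ring

end LaplacianRecursion

lemma sum_pow_mul_smul_eq {E : Type*} [SMul ℝ E] {q : ℕ} {p : ℕ → E → ℝ}
    (hhom : ∀ j : ℕ, 2 * j ≤ q → ∀ t : ℝ, 0 < t → ∀ y, p j (t • y) = t ^ (q - 2 * j) * p j y)
    {t : ℝ} (ht : 0 < t) (r : ℝ) (y : E) :
    ∑ j ∈ Finset.range (q / 2 + 1), (t * r) ^ (2 * j) * p j (t • y) =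
      t ^ q * ∑ j ∈ Finset.range (q / 2 + 1), r ^ (2 * j) * p j y := by
  rw [Finset.mul_sum]
  refine Finset.sum_congr rfl fun j hj => ?_
  have hjq : 2 * j ≤ q := by have := Finset.mem_range.mp hj; omega
  rw [hhom j hjq t ht y, mul_pow, ← Nat.add_sub_of_le hjq, pow_add, Nat.add_sub_cancel_left]
  ring

lemma lapy_eq_lapY {ℓ : ℕ} (F : ℝ × (Fin ℓ → ℝ) → ℝ) (z : ℝ × (Fin ℓ → ℝ)) :
    lapy F z = lapY (fun y => F (z.1, y)) z.2 :=
  rfl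

open Finset in
lemma betaLaplace_sum_pow_mul_eq_zero (β : ℝ) {ℓ : ℕ} {p : ℕ → (Fin ℓ → ℝ) → ℝ}
    (hpoly : ∀ j, ∃ P : MvPolynomial (Fin ℓ) ℝ, ∀ y, p j y = eval y P)
    (hlap : ∀ j y, lapY (p j) y = -((2 * j + 2) * (2 * j + 2 + β)) * p (j + 1) y)
    {m : ℕ} (hm : ∀ y, p (m + 1) y = 0) {r : ℝ} (hr : 0 < r) (y : Fin ℓ → ℝ) :
    r ^ (-(1 + β)) *
        pr (fun z => z.1 ^ (1 + β) *
          pr (fun w => ∑ j ∈ range (m + 1), w.1 ^ (2 * j) * p j w.2) z) (r, y)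
      + lapy (fun w => ∑ j ∈ range (m + 1), w.1 ^ (2 * j) * p j w.2) (r, y) = 0 := by
  have hlapy : lapy (fun w => ∑ j ∈ range (m + 1), w.1 ^ (2 * j) * p j w.2) (r, y)
      = ∑ j ∈ range (m + 1), r ^ (2 * j) * lapY (p j) y := by
    rw [lapy_eq_lapY]
    exact lapY_sum_mul _ (fun j => r ^ (2 * j)) hpoly y
  calc _ = ∑ j ∈ range m, (2 * j + 2) * (2 * j + 2 + β) * r ^ (2 * j) * p (j + 1) y
        + ∑ j ∈ range (m + 1), r ^ (2 * j) * lapY (p j) y :=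
        congrArg₂ (· + ·) (radial_sum_pow_two_mul β (fun j => p j y) m hr) hlapy
    _ = 0 := by
      rw [sum_range_succ, hlap, hm, mul_zero, mul_zero, add_zero, ← sum_add_distrib]
      exact sum_eq_zero fun j _ => by rw [hlap]; ring

theorem stmt3_general (β : ℝ) (hβ : 0 < β) (ℓ : ℕ) (q : ℕ)
    (p : ℕ → (Fin ℓ → ℝ) → ℝ)
    (hpoly0 : ∃ P : MvPolynomial (Fin ℓ) ℝ, ∀ y, p 0 y = MvPolynomial.eval y P)
    (hhom0 : ∀ t : ℝ, 0 < t → ∀ y, p 0 (t • y) = t ^ q * p 0 y)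
    (hrec : ∀ j : ℕ, p (j + 1) =
      fun y => -((2 * (j : ℝ) + 2) * (2 * (j : ℝ) + 2 + β))⁻¹ * lapY (p j) y) :
    (∀ j : ℕ, ∃ P : MvPolynomial (Fin ℓ) ℝ, ∀ y, p j y = MvPolynomial.eval y P) ∧
    (∀ j : ℕ, 2 * j ≤ q → ∀ t : ℝ, 0 < t → ∀ y, p j (t • y) = t ^ (q - 2 * j) * p j y) ∧
    (∀ j : ℕ, q < 2 * j → ∀ y, p j y = 0) ∧
    (∀ t : ℝ, 0 < t → ∀ r : ℝ, ∀ y : Fin ℓ → ℝ,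
      (∑ j ∈ Finset.range (q / 2 + 1), (t * r) ^ (2 * j) * p j (t • y)) =
        t ^ q * ∑ j ∈ Finset.range (q / 2 + 1), r ^ (2 * j) * p j y) ∧
    (∀ pt : ℝ × (Fin ℓ → ℝ), 0 < pt.1 →
      pt.1 ^ (-(1 + β)) *
          pr (fun z => z.1 ^ (1 + β) *
            pr (fun w => ∑ j ∈ Finset.range (q / 2 + 1), w.1 ^ (2 * j) * p j w.2) z) pt
        + lapy (fun w => ∑ j ∈ Finset.range (q / 2 + 1), w.1 ^ (2 * j) * p j w.2) pt
        = 0) := by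
  have hpoly := exists_eval_eq_of_lapY_rec _ hrec hpoly0
  have hhom := posHomogeneous_of_lapY_rec _ hrec (d := q) fun t ht y => by
    simpa using hhom0 t ht y
  have hzero : ∀ j, q < 2 * j → ∀ y, p j y = 0 := fun j hj => by
    obtain ⟨P, hP⟩ := hpoly j
    exact (hhom j).eq_zero_of_neg (funext hP ▸ continuous_eval P).continuousAt (by omega)
  have hhom' : ∀ j, 2 * j ≤ q → ∀ t : ℝ, 0 < t → ∀ y, p j (t • y) = t ^ (q - 2 * j) * p j y := by
    intro j hj t ht y
    rw [hhom j t ht y, ← zpow_natCast]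
    push_cast [hj]
    rfl
  have hlap : ∀ j y, lapY (p j) y = -((2 * j + 2) * (2 * j + 2 + β)) * p (j + 1) y := by
    intro j y
    have hpos : 0 < (2 * (j : ℝ) + 2) * (2 * j + 2 + β) := by positivity
    rw [hrec j]
    field_simp
  exact ⟨hpoly, hhom', hzero, fun t ht => sum_pow_mul_smul_eq hhom' ht, fun pt hr =>
    betaLaplace_sum_pow_mul_eq_zero β hpoly hlap (hzero _ (by omega)) hr pt.2⟩

/-- Given a homogeneous degree-`q` polynomial `p₀` on `ℝ^ℓ` and the
inductively defined `p_{j+1} = -((2j+2)(2j+2+β))⁻¹ Δ_y p_j`, each `p_j` is a polynomial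
function homogeneous of degree `q - 2j` (zero when `2j > q`), and
`h(r,y) = ∑_{0 ≤ j ≤ q/2} r^{2j} p_j(y)` is positively homogeneous of degree `q` and
satisfies the `β`-Laplace equation at every point with `r > 0`. -/
theorem stmt3 (β : ℝ) (hβ : 0 < β) (ℓ : ℕ) (hℓ : 1 ≤ ℓ) (q : ℕ)
    (p : ℕ → (Fin ℓ → ℝ) → ℝ)
    (hpoly0 : ∃ P : MvPolynomial (Fin ℓ) ℝ, ∀ y, p 0 y = MvPolynomial.eval y P)
    (hhom0 : ∀ t : ℝ, 0 < t → ∀ y, p 0 (t • y) = t ^ q * p 0 y)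
    (hrec : ∀ j : ℕ, p (j + 1) =
      fun y => -((2 * (j : ℝ) + 2) * (2 * (j : ℝ) + 2 + β))⁻¹ * lapY (p j) y) :
    (∀ j : ℕ, ∃ P : MvPolynomial (Fin ℓ) ℝ, ∀ y, p j y = MvPolynomial.eval y P) ∧
    (∀ j : ℕ, 2 * j ≤ q → ∀ t : ℝ, 0 < t → ∀ y, p j (t • y) = t ^ (q - 2 * j) * p j y) ∧
    (∀ j : ℕ, q < 2 * j → ∀ y, p j y = 0) ∧
    (∀ t : ℝ, 0 < t → ∀ r : ℝ, ∀ y : Fin ℓ → ℝ,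
      (∑ j ∈ Finset.range (q / 2 + 1), (t * r) ^ (2 * j) * p j (t • y)) =
        t ^ q * ∑ j ∈ Finset.range (q / 2 + 1), r ^ (2 * j) * p j y) ∧
    (∀ pt : ℝ × (Fin ℓ → ℝ), 0 < pt.1 →
      pt.1 ^ (-(1 + β)) *
          pr (fun z => z.1 ^ (1 + β) *
            pr (fun w => ∑ j ∈ Finset.range (q / 2 + 1), w.1 ^ (2 * j) * p j w.2) z) pt
        + lapy (fun w => ∑ j ∈ Finset.range (q / 2 + 1), w.1 ^ (2 * j) * p j w.2) pt
        = 0) :=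
  stmt3_general β hβ ℓ q p hpoly0 hhom0 hrec

end
end

section
/- Let β > 0 and let h be a smooth function on an open set U ⊆ {(r, y) ∈ ℝ × ℝ : r > 0}. Define H(ρ, θ) = h(ρ cos θ, ρ sin θ). Then at every (ρ, θ) with ρ > 0, θ ∈ (−π/2, π/2) and (ρ cos θ, ρ sin θ) ∈ U, the quantity r^{−(1+β)} ∂_r(r^{1+β} ∂_r h) + ∂²h/∂y², evaluated at (r, y) = (ρ cos θ, ρ sin θ), equals ρ^{−2−β} ∂_ρ(ρ^{2+β} ∂_ρ H) + ρ^{−2} (cos θ)^{−1−β} ∂_θ((cos θ)^{1+β} ∂_θ H). -/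
noncomputable section

/-- Partial derivative in the first variable of a function on `ℝ × ℝ`. -/
def p1 (f : ℝ × ℝ → ℝ) (p : ℝ × ℝ) : ℝ := deriv (fun s : ℝ => f (s, p.2)) p.1

/-- Partial derivative in the second variable of a function on `ℝ × ℝ`. -/
def p2 (f : ℝ × ℝ → ℝ) (p : ℝ × ℝ) : ℝ := deriv (fun t : ℝ => f (p.1, t)) p.2

set_option maxHeartbeats 1000000 in
/-- In polar coordinates `r = ρ cos θ`, `y = ρ sin θ`, for a smooth
function `h` on an open subset of `{r > 0}` and `H(ρ,θ) = h(ρ cos θ, ρ sin θ)`,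
the `β`-Laplacian `r^{-(1+β)} ∂_r(r^{1+β} ∂_r h) + ∂²h/∂y²` evaluated at
`(ρ cos θ, ρ sin θ)` equals
`ρ^{-2-β} ∂_ρ(ρ^{2+β} ∂_ρ H) + ρ^{-2} (cos θ)^{-1-β} ∂_θ((cos θ)^{1+β} ∂_θ H)`. -/
theorem stmt4 (β : ℝ) (hβ : 0 < β)
    (U : Set (ℝ × ℝ)) (hUopen : IsOpen U) (hUpos : U ⊆ {p : ℝ × ℝ | 0 < p.1})
    (h : ℝ × ℝ → ℝ) (hsmooth : ContDiffOn ℝ (⊤ : ℕ∞) h U)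
    (H : ℝ × ℝ → ℝ)
    (hH : ∀ ρ θ : ℝ, H (ρ, θ) = h (ρ * Real.cos θ, ρ * Real.sin θ)) :
    ∀ ρ θ : ℝ, 0 < ρ → θ ∈ Set.Ioo (-(Real.pi / 2)) (Real.pi / 2) →
      (ρ * Real.cos θ, ρ * Real.sin θ) ∈ U →
      (ρ * Real.cos θ) ^ (-(1 + β)) *
          p1 (fun q => q.1 ^ (1 + β) * p1 h q) (ρ * Real.cos θ, ρ * Real.sin θ)
        + p2 (p2 h) (ρ * Real.cos θ, ρ * Real.sin θ)
      = ρ ^ (-2 - β) * p1 (fun q => q.1 ^ (2 + β) * p1 H q) (ρ, θ)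
        + ρ ^ (-2 : ℝ) * (Real.cos θ) ^ (-1 - β) *
            p2 (fun q => (Real.cos q.2) ^ (1 + β) * p2 H q) (ρ, θ) := by
  intro ρ θ hρ hθ hmem
  have hc : 0 < Real.cos θ := Real.cos_pos_of_mem_Ioo hθ
  set c := Real.cos θ with hc_def
  set s := Real.sin θ with hs_def
  have hr : 0 < ρ * c := mul_pos hρ hc
  -- basic differentiability facts
  have hdiff : ∀ p ∈ U, DifferentiableAt ℝ h p := fun p hp =>
    (hsmooth.differentiableOn (by simp)).differentiableAt (hUopen.mem_nhds hp)
  have hf' : ContDiffOn ℝ (⊤ : ℕ∞) (fderiv ℝ h) U := hsmooth.fderiv_of_isOpen hUopen (by simp)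
  have hf'diff : DifferentiableAt ℝ (fderiv ℝ h) (ρ * c, ρ * s) :=
    (hf'.differentiableOn (by simp)).differentiableAt (hUopen.mem_nhds hmem)
  set f'' := fderiv ℝ (fderiv ℝ h) (ρ * c, ρ * s) with hf''_def
  have hsymm : ∀ v w, f'' v w = f'' w v := by
    intro v w
    refine second_derivative_symmetric_of_eventually (f := h) ?_ hf'diff.hasFDerivAt v w
    filter_upwards [hUopen.mem_nhds hmem] with p hp using (hdiff p hp).hasFDerivAt
  -- chain rule helpers
  have key : ∀ (p : ℝ × ℝ), p ∈ U → ∀ (γ : ℝ → ℝ × ℝ) (t : ℝ) (v : ℝ × ℝ),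
      HasDerivAt γ v t → γ t = p →
      HasDerivAt (fun x => h (γ x)) (fderiv ℝ h p v) t := by
    intro p hp γ t v hγ hγt
    subst hγt
    exact (hdiff _ hp).hasFDerivAt.comp_hasDerivAt t hγ
  have key' : ∀ (γ : ℝ → ℝ × ℝ) (t : ℝ) (v : ℝ × ℝ),
      HasDerivAt γ v t → γ t = (ρ * c, ρ * s) →
      HasDerivAt (fun x => fderiv ℝ h (γ x)) (f'' v) t := by
    intro γ t v hγ hγt
    have h1 : HasFDerivAt (fderiv ℝ h) f'' (γ t) := by
      rw [hγt]; exact hf'diff.hasFDerivAt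
    exact h1.comp_hasDerivAt t hγ
  -- partial derivatives of h as directional derivatives
  have ev1 : ∀ p ∈ U, p1 h p = fderiv ℝ h p (1, 0) := by
    intro p hp
    have hcurve : HasDerivAt (fun x : ℝ => (x, p.2)) ((1 : ℝ), (0 : ℝ)) p.1 :=
      (hasDerivAt_id p.1).prodMk (hasDerivAt_const p.1 p.2)
    exact (key p hp _ _ _ hcurve rfl).deriv
  have ev2 : ∀ p ∈ U, p2 h p = fderiv ℝ h p (0, 1) := by
    intro p hp
    have hcurve : HasDerivAt (fun y : ℝ => (p.1, y)) ((0 : ℝ), (1 : ℝ)) p.2 :=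
      (hasDerivAt_const p.2 p.1).prodMk (hasDerivAt_id p.2)
    exact (key p hp _ _ _ hcurve rfl).deriv
  set A := fderiv ℝ h (ρ * c, ρ * s) (1, 0) with hA_def
  set B := fderiv ℝ h (ρ * c, ρ * s) (0, 1) with hB_def
  set A1 := f'' (1, 0) (1, 0) with hA1_def
  set A2 := f'' (1, 0) (0, 1) with hA2_def
  set A3 := f'' (0, 1) (0, 1) with hA3_def
  -- linearity expansions
  have expand1 : ∀ a b : ℝ, fderiv ℝ h (ρ * c, ρ * s) (a, b) = a * A + b * B := by
    intro a b
    have hv : (a, b) = a • ((1 : ℝ), (0 : ℝ)) + b • ((0 : ℝ), (1 : ℝ)) := by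
      simp [Prod.ext_iff]
    rw [hv, map_add, map_smul, map_smul, hA_def, hB_def]
    simp [smul_eq_mul]
  have expand2 : ∀ a b a' b' : ℝ,
      f'' (a, b) (a', b') = a * a' * A1 + a * b' * A2 + b * a' * A2 + b * b' * A3 := by
    intro a b a' b'
    have hv : (a, b) = a • ((1 : ℝ), (0 : ℝ)) + b • ((0 : ℝ), (1 : ℝ)) := by
      simp [Prod.ext_iff]
    have hw : (a', b') = a' • ((1 : ℝ), (0 : ℝ)) + b' • ((0 : ℝ), (1 : ℝ)) := by
      simp [Prod.ext_iff]
    have hswap : f'' (0, 1) (1, 0) = A2 := by rw [hsymm]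
    rw [hv, hw, map_add, map_smul, map_smul]
    simp only [ContinuousLinearMap.add_apply, ContinuousLinearMap.smul_apply, map_add,
      map_smul, smul_eq_mul, hswap]
    rw [hA1_def, hA2_def, hA3_def]
    ring
  -- D1 : first LHS derivative
  have D1 : p1 (fun q => q.1 ^ (1 + β) * p1 h q) (ρ * c, ρ * s)
      = (1 + β) * (ρ * c) ^ β * A + (ρ * c) ^ (1 + β) * A1 := by
    show deriv (fun x : ℝ => x ^ (1 + β) * p1 h (x, ρ * s)) (ρ * c) = _
    have hne : ∀ᶠ x in nhds (ρ * c), (x, ρ * s) ∈ U := by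
      have hcont : Continuous fun x : ℝ => (x, ρ * s) := continuous_id.prodMk continuous_const
      exact hcont.continuousAt.preimage_mem_nhds (hUopen.mem_nhds hmem)
    have hEq : (fun x : ℝ => x ^ (1 + β) * p1 h (x, ρ * s))
        =ᶠ[nhds (ρ * c)] fun x => x ^ (1 + β) * fderiv ℝ h (x, ρ * s) (1, 0) := by
      filter_upwards [hne] with x hx
      rw [ev1 _ hx]
    rw [hEq.deriv_eq]
    have h1 : HasDerivAt (fun x : ℝ => x ^ (1 + β)) ((1 + β) * (ρ * c) ^ β) (ρ * c) := by
      have := Real.hasDerivAt_rpow_const (x := ρ * c) (p := 1 + β) (Or.inl hr.ne')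
      rwa [show (1 : ℝ) + β - 1 = β by ring] at this
    have hcurve : HasDerivAt (fun x : ℝ => (x, ρ * s)) ((1 : ℝ), (0 : ℝ)) (ρ * c) :=
      (hasDerivAt_id _).prodMk (hasDerivAt_const _ _)
    have h2 : HasDerivAt (fun x : ℝ => fderiv ℝ h (x, ρ * s) (1, 0)) A1 (ρ * c) := by
      have := (key' _ _ _ hcurve rfl).clm_apply (hasDerivAt_const (ρ * c) ((1 : ℝ), (0 : ℝ)))
      simpa using this
    exact (h1.mul h2).deriv
  -- D2 : second LHS derivative
  have D2 : p2 (p2 h) (ρ * c, ρ * s) = A3 := by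
    show deriv (fun y : ℝ => p2 h (ρ * c, y)) (ρ * s) = _
    have hne : ∀ᶠ y in nhds (ρ * s), (ρ * c, y) ∈ U := by
      have hcont : Continuous fun y : ℝ => (ρ * c, y) := continuous_const.prodMk continuous_id
      exact hcont.continuousAt.preimage_mem_nhds (hUopen.mem_nhds hmem)
    have hEq : (fun y : ℝ => p2 h (ρ * c, y))
        =ᶠ[nhds (ρ * s)] fun y => fderiv ℝ h (ρ * c, y) (0, 1) := by
      filter_upwards [hne] with y hy
      rw [ev2 _ hy]
    rw [hEq.deriv_eq]
    have hcurve : HasDerivAt (fun y : ℝ => (ρ * c, y)) ((0 : ℝ), (1 : ℝ)) (ρ * s) :=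
      (hasDerivAt_const _ _).prodMk (hasDerivAt_id _)
    have h2 : HasDerivAt (fun y : ℝ => fderiv ℝ h (ρ * c, y) (0, 1)) A3 (ρ * s) := by
      have := (key' _ _ _ hcurve rfl).clm_apply (hasDerivAt_const (ρ * s) ((0 : ℝ), (1 : ℝ)))
      simpa using this
    exact h2.deriv
  -- D3 : first RHS derivative
  have evH1 : ∀ x : ℝ, (x * c, x * s) ∈ U → p1 H (x, θ) = fderiv ℝ h (x * c, x * s) (c, s) := by
    intro x hx
    show deriv (fun t : ℝ => H (t, θ)) x = _
    have hfun : (fun t : ℝ => H (t, θ)) = fun t => h (t * c, t * s) :=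
      funext fun t => hH t θ
    rw [hfun]
    have hcurve : HasDerivAt (fun t : ℝ => (t * c, t * s)) (c, s) x :=
      (hasDerivAt_mul_const c).prodMk (hasDerivAt_mul_const s)
    exact (key _ hx _ _ _ hcurve rfl).deriv
  have D3 : p1 (fun q => q.1 ^ (2 + β) * p1 H q) (ρ, θ)
      = (2 + β) * ρ ^ (1 + β) * fderiv ℝ h (ρ * c, ρ * s) (c, s)
        + ρ ^ (2 + β) * f'' (c, s) (c, s) := by
    show deriv (fun x : ℝ => x ^ (2 + β) * p1 H (x, θ)) ρ = _
    have hne : ∀ᶠ x in nhds ρ, (x * c, x * s) ∈ U := by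
      have hcont : Continuous fun x : ℝ => (x * c, x * s) :=
        (continuous_id.mul continuous_const).prodMk (continuous_id.mul continuous_const)
      have := hcont.continuousAt.preimage_mem_nhds (hUopen.mem_nhds hmem)
      exact this
    have hEq : (fun x : ℝ => x ^ (2 + β) * p1 H (x, θ))
        =ᶠ[nhds ρ] fun x => x ^ (2 + β) * fderiv ℝ h (x * c, x * s) (c, s) := by
      filter_upwards [hne] with x hx
      rw [evH1 x hx]
    rw [hEq.deriv_eq]
    have h1 : HasDerivAt (fun x : ℝ => x ^ (2 + β)) ((2 + β) * ρ ^ (1 + β)) ρ := by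
      have := Real.hasDerivAt_rpow_const (x := ρ) (p := 2 + β) (Or.inl hρ.ne')
      rwa [show (2 : ℝ) + β - 1 = 1 + β by ring] at this
    have hcurve : HasDerivAt (fun x : ℝ => (x * c, x * s)) (c, s) ρ :=
      (hasDerivAt_mul_const c).prodMk (hasDerivAt_mul_const s)
    have h2 : HasDerivAt (fun x : ℝ => fderiv ℝ h (x * c, x * s) (c, s))
        (f'' (c, s) (c, s)) ρ := by
      have := (key' _ _ _ hcurve rfl).clm_apply (hasDerivAt_const ρ (c, s))
      simpa using this
    exact (h1.mul h2).deriv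
  -- D4 : second RHS derivative
  have evH2 : ∀ t : ℝ, (ρ * Real.cos t, ρ * Real.sin t) ∈ U →
      p2 H (ρ, t) = fderiv ℝ h (ρ * Real.cos t, ρ * Real.sin t)
        (ρ * -Real.sin t, ρ * Real.cos t) := by
    intro t ht
    show deriv (fun u : ℝ => H (ρ, u)) t = _
    have hfun : (fun u : ℝ => H (ρ, u)) = fun u => h (ρ * Real.cos u, ρ * Real.sin u) :=
      funext fun u => hH ρ u
    rw [hfun]
    have hcurve : HasDerivAt (fun u : ℝ => (ρ * Real.cos u, ρ * Real.sin u))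
        (ρ * -Real.sin t, ρ * Real.cos t) t :=
      ((Real.hasDerivAt_cos t).const_mul ρ).prodMk ((Real.hasDerivAt_sin t).const_mul ρ)
    exact (key _ ht _ _ _ hcurve rfl).deriv
  have D4 : p2 (fun q => (Real.cos q.2) ^ (1 + β) * p2 H q) (ρ, θ)
      = ((1 + β) * c ^ β * -s) * fderiv ℝ h (ρ * c, ρ * s) (ρ * -s, ρ * c)
        + c ^ (1 + β) * (f'' (ρ * -s, ρ * c) (ρ * -s, ρ * c)
            + fderiv ℝ h (ρ * c, ρ * s) (ρ * -c, ρ * -s)) := by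
    show deriv (fun t : ℝ => (Real.cos t) ^ (1 + β) * p2 H (ρ, t)) θ = _
    have hne : ∀ᶠ t in nhds θ, (ρ * Real.cos t, ρ * Real.sin t) ∈ U := by
      have hcont : Continuous fun t : ℝ => (ρ * Real.cos t, ρ * Real.sin t) :=
        (continuous_const.mul Real.continuous_cos).prodMk
          (continuous_const.mul Real.continuous_sin)
      exact hcont.continuousAt.preimage_mem_nhds (hUopen.mem_nhds hmem)
    have hEq : (fun t : ℝ => (Real.cos t) ^ (1 + β) * p2 H (ρ, t))
        =ᶠ[nhds θ] fun t => (Real.cos t) ^ (1 + β) *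
          fderiv ℝ h (ρ * Real.cos t, ρ * Real.sin t) (ρ * -Real.sin t, ρ * Real.cos t) := by
      filter_upwards [hne] with t ht
      rw [evH2 t ht]
    rw [hEq.deriv_eq]
    have h1 : HasDerivAt (fun t : ℝ => (Real.cos t) ^ (1 + β)) ((1 + β) * c ^ β * -s) θ := by
      have hg := Real.hasDerivAt_rpow_const (x := c) (p := 1 + β) (Or.inl hc.ne')
      have := hg.comp θ (Real.hasDerivAt_cos θ)
      rwa [show (1 : ℝ) + β - 1 = β by ring] at this
    have hcurve : HasDerivAt (fun t : ℝ => (ρ * Real.cos t, ρ * Real.sin t))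
        (ρ * -s, ρ * c) θ :=
      ((Real.hasDerivAt_cos θ).const_mul ρ).prodMk ((Real.hasDerivAt_sin θ).const_mul ρ)
    have hu : HasDerivAt (fun t : ℝ => ((ρ * -Real.sin t, ρ * Real.cos t) : ℝ × ℝ))
        (ρ * -c, ρ * -s) θ := by
      have h1' : HasDerivAt (fun t : ℝ => ρ * -Real.sin t) (ρ * -c) θ :=
        ((Real.hasDerivAt_sin θ).neg.const_mul ρ)
      have h2' : HasDerivAt (fun t : ℝ => ρ * Real.cos t) (ρ * -s) θ :=
        (Real.hasDerivAt_cos θ).const_mul ρ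
      exact h1'.prodMk h2'
    have h2 : HasDerivAt (fun t : ℝ => fderiv ℝ h (ρ * Real.cos t, ρ * Real.sin t)
          (ρ * -Real.sin t, ρ * Real.cos t))
        (f'' (ρ * -s, ρ * c) (ρ * -s, ρ * c)
          + fderiv ℝ h (ρ * c, ρ * s) (ρ * -c, ρ * -s)) θ := by
      have := (key' _ _ _ hcurve rfl).clm_apply hu
      simpa using this
    exact (h1.mul h2).deriv
  rw [D1, D2, D3, D4, expand1, expand1, expand1, expand2, expand2]
  -- rpow arithmetic
  have hρβ : (0 : ℝ) < ρ ^ β := Real.rpow_pos_of_pos hρ β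
  have hcβ : (0 : ℝ) < c ^ β := Real.rpow_pos_of_pos hc β
  have e1 : (ρ * c) ^ (1 + β) = ρ * c * (ρ ^ β * c ^ β) := by
    rw [Real.rpow_add hr, Real.rpow_one, Real.mul_rpow hρ.le hc.le]
  have e2 : (ρ * c) ^ (-(1 + β)) = (ρ * c * (ρ ^ β * c ^ β))⁻¹ := by
    rw [Real.rpow_neg hr.le, e1]
  have e3 : ρ ^ (2 + β) = ρ * ρ * ρ ^ β := by
    rw [show (2 : ℝ) + β = 1 + 1 + β by ring, Real.rpow_add hρ, Real.rpow_add hρ,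
      Real.rpow_one]
  have e4 : ρ ^ (-2 - β : ℝ) = (ρ * ρ * ρ ^ β)⁻¹ := by
    rw [show (-2 - β : ℝ) = -(1 + 1 + β) by ring, Real.rpow_neg hρ.le, Real.rpow_add hρ,
      Real.rpow_add hρ, Real.rpow_one]
  have e5 : ρ ^ (1 + β) = ρ * ρ ^ β := by
    rw [Real.rpow_add hρ, Real.rpow_one]
  have e6 : ρ ^ (-2 : ℝ) = (ρ * ρ)⁻¹ := by
    rw [show (-2 : ℝ) = -(1 + 1) by ring, Real.rpow_neg hρ.le, Real.rpow_add hρ, Real.rpow_one]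
  have e7 : c ^ (1 + β) = c * c ^ β := by
    rw [Real.rpow_add hc, Real.rpow_one]
  have e8 : c ^ (-1 - β : ℝ) = (c * c ^ β)⁻¹ := by
    rw [show (-1 - β : ℝ) = -(1 + β) by ring, Real.rpow_neg hc.le, Real.rpow_add hc,
      Real.rpow_one]
  have e9 : (ρ * c) ^ β = ρ ^ β * c ^ β := Real.mul_rpow hρ.le hc.le
  rw [e1, e2, e3, e4, e5, e6, e7, e8, e9]
  have hs2 : s ^ 2 = 1 - c ^ 2 := by
    rw [hs_def, hc_def, Real.sin_sq]
  generalize ρ ^ β = P at *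
  generalize c ^ β = Q at *
  field_simp
  linear_combination (-((1+β)*A + ρ*c*A1 + ρ*c*A3)) * hs2

end
end

section
/- Let T be a real number, b : ℕ → ℝ, and q : ℕ → ℝ strictly increasing with q(0) ≥ 0. Assume that the series ∑_{i=0}^∞ b_i² e^{2 q_i t} converges for every t < T and that b_{i} ≠ 0 for at least one i. Then the function ψ(t) = log(∑_{i=0}^∞ b_i² e^{2 q_i t}) is convex on the interval (−∞, T). Moreover, if for some t < T one has ψ(t) − ψ(t − log 2) = ψ(t − log 2) − ψ(t − 2 log 2), then there exists i₀ such that b_i = 0 for every i ≠ i₀, and the common value of both sides is log(4^{q_{i₀}}). -/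
/-!
Each term `aᵢ e^{cᵢ t}` is log-affine in `t`, so Hölder's inequality makes the sum
`F t = ∑ aᵢ e^{cᵢ t}` log-convex. For the rigidity, put `wᵢ = aᵢ e^{cᵢ (t - 2h)}` and
`xᵢ = e^{cᵢ h}`: then `F (t - 2h), F (t - h), F t` are the moments `∑ wᵢ, ∑ wᵢ xᵢ, ∑ wᵢ xᵢ²`,
and equal increments of `log F` say that the `w`-weighted variance of `x` vanishes. Hence
`x` is constant on the support of `w`, which for injective exponents `cᵢ = 2 qᵢ` forces the
support to be a single index.
-/

open Real

theorem eq_div_of_tsum_mul_tsum_mul_sq_eq_sq {ι : Type*} {w x : ι → ℝ} (hw : ∀ i, 0 ≤ w i)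
    (h₀ : Summable w) (h₁ : Summable fun i => w i * x i) (h₂ : Summable fun i => w i * x i ^ 2)
    (heq : (∑' i, w i) * (∑' i, w i * x i ^ 2) = (∑' i, w i * x i) ^ 2) {i : ι}
    (hi : w i ≠ 0) : x i = (∑' i, w i * x i) / ∑' i, w i := by
  set m := (∑' i, w i * x i) / ∑' i, w i
  have hS₀ : 0 < ∑' i, w i := h₀.tsum_pos hw i ((hw i).lt_of_ne' hi)
  have hexpand : (fun k => w k * (x k - m) ^ 2) =
      fun k => w k * x k ^ 2 - 2 * m * (w k * x k) + m ^ 2 * w k := by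
    funext k; ring
  have hsum : Summable fun k => w k * (x k - m) ^ 2 := by
    rw [hexpand]; exact (h₂.sub (h₁.mul_left _)).add (h₀.mul_left _)
  have hvar : ∑' k, w k * (x k - m) ^ 2 = 0 := by
    rw [hexpand, (h₂.sub (h₁.mul_left _)).tsum_add (h₀.mul_left _), h₂.tsum_sub (h₁.mul_left _),
      tsum_mul_left, tsum_mul_left]
    simp only [m]
    field_simp
    linear_combination heq
  have hterm := congrFun ((hasSum_zero_iff_of_nonneg fun k => mul_nonneg (hw k) (sq_nonneg _)).1
    (hvar ▸ hsum.hasSum)) i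
  exact sub_eq_zero.1 (pow_eq_zero_iff two_ne_zero |>.1 ((mul_eq_zero.1 hterm).resolve_left hi))

theorem tsum_rpow_mul_rpow_le {ι : Type*} {u v : ι → ℝ} {θ μ : ℝ} (hu : ∀ i, 0 ≤ u i)
    (hv : ∀ i, 0 ≤ v i) (hU : Summable u) (hV : Summable v) (hθ : 0 < θ) (hμ : 0 < μ)
    (hθμ : θ + μ = 1) :
    ∑' i, u i ^ θ * v i ^ μ ≤ (∑' i, u i) ^ θ * (∑' i, v i) ^ μ := by
  have := inner_le_Lp_mul_Lq_tsum_of_nonneg (Real.HolderConjugate.inv_inv hθ hμ hθμ)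
    (fun i => rpow_nonneg (hu i) θ) (fun i => rpow_nonneg (hv i) μ)
    (by simpa [rpow_rpow_inv (hu _) hθ.ne'] using hU)
    (by simpa [rpow_rpow_inv (hv _) hμ.ne'] using hV)
  simpa [rpow_rpow_inv (hu _) hθ.ne', rpow_rpow_inv (hv _) hμ.ne'] using this

section ExpSum

variable {ι : Type*} {a c : ι → ℝ}

/-- Junk value `0` where the series diverges. -/
noncomputable def expSum (a c : ι → ℝ) (t : ℝ) : ℝ := ∑' i, a i * exp (c i * t)

theorem expSum_pos (ha : ∀ i, 0 ≤ a i) {t : ℝ} (hsum : Summable fun i => a i * exp (c i * t))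
    {j : ι} (hj : a j ≠ 0) : 0 < expSum a c t :=
  hsum.tsum_pos (fun i => mul_nonneg (ha i) (exp_pos _).le) j
    (mul_pos ((ha j).lt_of_ne' hj) (exp_pos _))

theorem mul_exp_mul_add_eq_rpow_mul_rpow {a c θ μ : ℝ} (ha : 0 ≤ a) (hθμ : θ + μ = 1) (x y : ℝ) :
    a * exp (c * (θ * x + μ * y)) = (a * exp (c * x)) ^ θ * (a * exp (c * y)) ^ μ := by
  rw [mul_rpow ha (exp_pos _).le, mul_rpow ha (exp_pos _).le, ← exp_mul, ← exp_mul,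
    mul_mul_mul_comm, ← rpow_add' ha (by rw [hθμ]; exact one_ne_zero), hθμ, rpow_one, ← exp_add]
  ring_nf

theorem convexOn_log_expSum {s : Set ℝ} (hs : Convex ℝ s) (ha : ∀ i, 0 ≤ a i)
    (hsum : ∀ t ∈ s, Summable fun i => a i * exp (c i * t)) {j : ι} (hj : a j ≠ 0) :
    ConvexOn ℝ s fun t => log (expSum a c t) := by
  refine convexOn_iff_forall_pos.2 ⟨hs, fun x hx y hy θ μ hθ hμ hθμ => ?_⟩
  have hxy : θ • x + μ • y ∈ s := hs hx hy hθ.le hμ.le hθμ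
  have hFx := expSum_pos ha (hsum x hx) hj
  have hFy := expSum_pos ha (hsum y hy) hj
  have hHolder : expSum a c (θ • x + μ • y) ≤ expSum a c x ^ θ * expSum a c y ^ μ := by
    simp only [expSum, smul_eq_mul, mul_exp_mul_add_eq_rpow_mul_rpow (ha _) hθμ]
    exact tsum_rpow_mul_rpow_le (fun i => mul_nonneg (ha i) (exp_pos _).le)
      (fun i => mul_nonneg (ha i) (exp_pos _).le) (hsum x hx) (hsum y hy) hθ hμ hθμ
  calc log (expSum a c (θ • x + μ • y))
      ≤ log (expSum a c x ^ θ * expSum a c y ^ μ) :=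
        log_le_log (expSum_pos ha (hsum _ hxy) hj) hHolder
    _ = θ • log (expSum a c x) + μ • log (expSum a c y) := by
        rw [log_mul (rpow_pos_of_pos hFx θ).ne' (rpow_pos_of_pos hFy μ).ne', log_rpow hFx,
          log_rpow hFy, smul_eq_mul, smul_eq_mul]

theorem mul_eq_mul_of_log_expSum_sub_eq (ha : ∀ i, 0 ≤ a i) {t h : ℝ}
    (h₀ : Summable fun i => a i * exp (c i * (t - 2 * h)))
    (h₁ : Summable fun i => a i * exp (c i * (t - h)))
    (h₂ : Summable fun i => a i * exp (c i * t))
    (heq : log (expSum a c t) - log (expSum a c (t - h)) =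
      log (expSum a c (t - h)) - log (expSum a c (t - 2 * h)))
    {i j : ι} (hi : a i ≠ 0) (hj : a j ≠ 0) : c i * h = c j * h := by
  set w : ι → ℝ := fun k => a k * exp (c k * (t - 2 * h))
  set x : ι → ℝ := fun k => exp (c k * h)
  have hw₁ : (fun k => a k * exp (c k * (t - h))) = fun k => w k * x k := by
    funext k; simp only [w, x, mul_assoc, ← exp_add]; ring_nf
  have hw₂ : (fun k => a k * exp (c k * t)) = fun k => w k * x k ^ 2 := by
    funext k; simp only [w, x, mul_assoc, ← exp_add, ← exp_nat_mul]; ring_nf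
  have hF₀ := expSum_pos ha h₀ hj
  have hF₁ := expSum_pos ha h₁ hj
  have hF₂ := expSum_pos ha h₂ hj
  have hmoments : expSum a c (t - 2 * h) * expSum a c t = expSum a c (t - h) ^ 2 := by
    refine log_injOn_pos (mul_pos hF₀ hF₂) (pow_pos hF₁ 2) ?_
    rw [log_mul hF₀.ne' hF₂.ne', log_pow]
    push_cast
    linarith
  rw [expSum, expSum, expSum, hw₁, hw₂] at hmoments
  rw [hw₁] at h₁
  rw [hw₂] at h₂
  have hw : ∀ k, 0 ≤ w k := fun k => mul_nonneg (ha k) (exp_pos _).le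
  have hwi : w i ≠ 0 := mul_ne_zero hi (exp_pos _).ne'
  have hwj : w j ≠ 0 := mul_ne_zero hj (exp_pos _).ne'
  exact exp_injective <| (eq_div_of_tsum_mul_tsum_mul_sq_eq_sq hw h₀ h₁ h₂ hmoments hwi).trans
    (eq_div_of_tsum_mul_tsum_mul_sq_eq_sq hw h₀ h₁ h₂ hmoments hwj).symm

theorem log_expSum_sub_log_expSum_of_eq_single {j : ι} (hj : a j ≠ 0)
    (hsingle : ∀ i, i ≠ j → a i = 0) (t s : ℝ) :
    log (expSum a c t) - log (expSum a c s) = c j * (t - s) := by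
  have hF : ∀ r, expSum a c r = a j * exp (c j * r) := fun r =>
    tsum_eq_single j fun i hi => by rw [hsingle i hi, zero_mul]
  rw [hF, hF, log_mul hj (exp_pos _).ne', log_mul hj (exp_pos _).ne', log_exp, log_exp]
  ring

end ExpSum

theorem stmt6_general (T : ℝ) (b q : ℕ → ℝ) (hq : StrictMono q)
    (hconv : ∀ t : ℝ, t < T → Summable (fun i => b i ^ 2 * Real.exp (2 * q i * t)))
    (hb : ∃ i, b i ≠ 0)
    (ψ : ℝ → ℝ) (hψ : ∀ t, ψ t = Real.log (∑' i, b i ^ 2 * Real.exp (2 * q i * t))) :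
    ConvexOn ℝ (Set.Iio T) ψ ∧
    (∀ t : ℝ, t < T →
      ψ t - ψ (t - Real.log 2) = ψ (t - Real.log 2) - ψ (t - 2 * Real.log 2) →
      ∃ i₀ : ℕ, (∀ i, i ≠ i₀ → b i = 0) ∧
        ψ t - ψ (t - Real.log 2) = Real.log ((4 : ℝ) ^ (q i₀))) := by
  obtain ⟨j, hj⟩ := hb
  have hj₂ : b j ^ 2 ≠ 0 := pow_ne_zero 2 hj
  have hb₂ : ∀ i, 0 ≤ b i ^ 2 := fun i => sq_nonneg _
  obtain rfl : ψ = fun t => log (expSum (fun i => b i ^ 2) (fun i => 2 * q i) t) := funext hψ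
  refine ⟨convexOn_log_expSum (convex_Iio T) hb₂ hconv hj₂, fun t ht heq => ?_⟩
  have hlog₂ : 0 < log 2 := log_pos one_lt_two
  have hsingle : ∀ i, i ≠ j → b i = 0 := fun i hij => by
    by_contra hi
    have := mul_eq_mul_of_log_expSum_sub_eq hb₂ (hconv _ (by linarith)) (hconv _ (by linarith))
      (hconv t ht) heq (pow_ne_zero 2 hi) hj₂
    exact hij (hq.injective (by linarith [mul_right_cancel₀ hlog₂.ne' this]))
  refine ⟨j, hsingle, ?_⟩
  beta_reduce
  rw [log_expSum_sub_log_expSum_of_eq_single (a := fun i => b i ^ 2) hj₂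
      (fun i hij => by simp [hsingle i hij]),
    log_rpow (by norm_num), show (4 : ℝ) = 2 ^ 2 by norm_num, log_pow]
  push_cast
  ring

/-- If `∑ b_i² e^{2 q_i t}` converges for every `t < T` (with `q`
strictly increasing, `q 0 ≥ 0`, and some `b_i ≠ 0`), then
`ψ(t) = log ∑ b_i² e^{2 q_i t}` is convex on `(-∞, T)`; and if for some `t < T` the
increments `ψ(t) - ψ(t - log 2)` and `ψ(t - log 2) - ψ(t - 2 log 2)` agree, then all
but one coefficient `b_{i₀}` vanish and the common value is `log (4^{q_{i₀}})`. -/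
theorem stmt6 (T : ℝ) (b q : ℕ → ℝ) (hq : StrictMono q) (hq0 : 0 ≤ q 0)
    (hconv : ∀ t : ℝ, t < T → Summable (fun i => b i ^ 2 * Real.exp (2 * q i * t)))
    (hb : ∃ i, b i ≠ 0)
    (ψ : ℝ → ℝ) (hψ : ∀ t, ψ t = Real.log (∑' i, b i ^ 2 * Real.exp (2 * q i * t))) :
    ConvexOn ℝ (Set.Iio T) ψ ∧
    (∀ t : ℝ, t < T →
      ψ t - ψ (t - Real.log 2) = ψ (t - Real.log 2) - ψ (t - 2 * Real.log 2) →
      ∃ i₀ : ℕ, (∀ i, i ≠ i₀ → b i = 0) ∧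
        ψ t - ψ (t - Real.log 2) = Real.log ((4 : ℝ) ^ (q i₀))) :=
  stmt6_general T b q hq hconv hb ψ hψ
end

section
/- Let R > 0, let b : ℕ → ℝ be not identically zero, and let q : ℕ → ℝ be strictly increasing with q(0) ≥ 0. Suppose the series F(ρ) = ∑_{i=0}^∞ b_i² ρ^{2 q_i} converges for every ρ ∈ (0, R]. Let Q ∈ (0, ∞) be such that Q ≠ 4^{q_i} for every i. Then for every ρ ∈ (0, R]: if F(ρ/2) ≥ Q · F(ρ/4), then F(ρ) > Q · F(ρ/2). -/
private lemma rpow_two_mul {x : ℝ} (hx : 0 < x) (y : ℝ) :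
    x ^ (2 * y) = (x ^ y) ^ 2 := by
  rw [mul_comm, Real.rpow_mul hx.le, ← Real.rpow_natCast (x ^ y) 2]
  norm_num

private lemma four_rpow (y : ℝ) : (4:ℝ) ^ y = ((2:ℝ) ^ y) ^ 2 := by
  have h : (4:ℝ) = 2 * 2 := by norm_num
  rw [h, Real.mul_rpow (by norm_num) (by norm_num)]
  ring

/-- Let `F(ρ) = ∑ b_i² ρ^{2 q_i}` with `b` not identically zero and
`q` strictly increasing, `q 0 ≥ 0`, the series converging on `(0, R]`.  If
`Q ∈ (0, ∞)` differs from every `4^{q_i}`, then for every `ρ ∈ (0, R]`: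
`F(ρ/2) ≥ Q · F(ρ/4)` implies `F(ρ) > Q · F(ρ/2)`. -/
theorem stmt7 (R : ℝ) (hR : 0 < R) (b q : ℕ → ℝ) (hb : ∃ i, b i ≠ 0)
    (hq : StrictMono q) (hq0 : 0 ≤ q 0)
    (hconv : ∀ ρ : ℝ, ρ ∈ Set.Ioc 0 R →
      Summable (fun i => b i ^ 2 * ρ ^ (2 * q i)))
    (F : ℝ → ℝ) (hF : ∀ ρ : ℝ, F ρ = ∑' i, b i ^ 2 * ρ ^ (2 * q i))
    (Q : ℝ) (hQ : 0 < Q) (hQq : ∀ i, Q ≠ (4 : ℝ) ^ (q i)) :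
    ∀ ρ : ℝ, ρ ∈ Set.Ioc 0 R →
      Q * F (ρ / 4) ≤ F (ρ / 2) → Q * F (ρ / 2) < F ρ := by
  intro ρ hρ hmain
  obtain ⟨hρ0, hρR⟩ := hρ
  have h4 : (0:ℝ) < ρ / 4 := by linarith
  have h2 : (0:ℝ) < ρ / 2 := by linarith
  set c : ℕ → ℝ := fun i => b i ^ 2 * (ρ/4) ^ (2 * q i) with hc
  set l : ℕ → ℝ := fun i => (4:ℝ) ^ (q i) with hl
  have hl0 : ∀ i, 0 < l i := fun i => Real.rpow_pos_of_pos (by norm_num) _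
  have hc0 : ∀ i, 0 ≤ c i :=
    fun i => mul_nonneg (sq_nonneg _) (Real.rpow_nonneg h4.le _)
  have hkey2 : ∀ i, b i ^ 2 * (ρ/2) ^ (2 * q i) = c i * l i := by
    intro i
    have hsplit : (ρ/2 : ℝ) = (ρ/4) * 2 := by ring
    simp only [hc, hl]
    rw [rpow_two_mul h2, rpow_two_mul h4, four_rpow, hsplit,
      Real.mul_rpow h4.le (by norm_num)]
    ring
  have hkey1 : ∀ i, b i ^ 2 * ρ ^ (2 * q i) = c i * l i ^ 2 := by
    intro i
    have hsplit : (ρ : ℝ) = (ρ/4) * 4 := by ring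
    simp only [hc, hl]
    rw [rpow_two_mul hρ0, rpow_two_mul h4, hsplit,
      Real.mul_rpow h4.le (by norm_num)]
    ring
  have S4 : Summable c := hconv (ρ/4) ⟨h4, by linarith⟩
  have S2 : Summable (fun i => c i * l i) := by
    have := hconv (ρ/2) ⟨h2, by linarith⟩
    simpa [hkey2] using this
  have S1 : Summable (fun i => c i * l i ^ 2) := by
    have := hconv ρ ⟨hρ0, hρR⟩
    simpa [hkey1] using this
  have hF4 : F (ρ/4) = ∑' i, c i := by rw [hF]
  have hF2 : F (ρ/2) = ∑' i, c i * l i := by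
    rw [hF]; exact tsum_congr hkey2
  have hF1 : F ρ = ∑' i, c i * l i ^ 2 := by
    rw [hF]; exact tsum_congr hkey1
  -- termwise comparison
  obtain ⟨i₀, hi₀⟩ := hb
  have hci₀ : 0 < c i₀ := by
    simp only [hc]
    positivity
  set f : ℕ → ℝ := fun i => Q * (c i * l i) - Q * (Q * c i) with hf
  set g : ℕ → ℝ := fun i => c i * l i ^ 2 - Q * (c i * l i) with hg
  have Sf : Summable f := (S2.mul_left Q).sub ((S4.mul_left Q).mul_left Q)
  have Sg : Summable g := S1.sub (S2.mul_left Q)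
  have hle : ∀ i, f i ≤ g i := by
    intro i
    have h1 : 0 ≤ c i * (l i - Q) ^ 2 := mul_nonneg (hc0 i) (sq_nonneg _)
    simp only [hf, hg]
    nlinarith [h1]
  have hlt : f i₀ < g i₀ := by
    have hne : l i₀ - Q ≠ 0 := sub_ne_zero.mpr (Ne.symm (hQq i₀))
    have h1 : 0 < c i₀ * (l i₀ - Q) ^ 2 := mul_pos hci₀ (by positivity)
    simp only [hf, hg]
    nlinarith [h1]
  have hsum : ∑' i, f i < ∑' i, g i := Summable.tsum_lt_tsum hle hlt Sf Sg
  have hfsum : ∑' i, f i = Q * F (ρ/2) - Q * (Q * F (ρ/4)) := by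
    simp only [hf]
    rw [Summable.tsum_sub (S2.mul_left Q) ((S4.mul_left Q).mul_left Q),
      tsum_mul_left, tsum_mul_left, tsum_mul_left, hF2, hF4]
  have hgsum : ∑' i, g i = F ρ - Q * F (ρ/2) := by
    simp only [hg]
    rw [Summable.tsum_sub S1 (S2.mul_left Q), tsum_mul_left, hF1, hF2]
  rw [hfsum, hgsum] at hsum
  nlinarith [hsum, hmain, hQ]
end

section
/- Let N ≥ 1, let U ⊆ ℝ^N be open, let V : U → ℝ be continuous, and let ψ : U → ℝ be a smooth function with ψ > 0 on U satisfying Δψ + Vψ = 0 on U, where Δ is the Euclidean Laplacian (the sum of the second partial derivatives). Then for every continuously differentiable function ζ : ℝ^N → ℝ with compact support contained in U, ∫_U ψ² |∇(ζ/ψ)|² dx = ∫_U (|∇ζ|² − V ζ²) dx, where ∇ denotes the Euclidean gradient and dx is Lebesgue measure. -/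
open MeasureTheory

noncomputable section

/-- Partial derivative in the `i`-th coordinate of a function on `ℝ^N`. -/
def pd {N : ℕ} (i : Fin N) (f : (Fin N → ℝ) → ℝ) (x : Fin N → ℝ) : ℝ :=
  deriv (fun t : ℝ => f (Function.update x i t)) (x i)

/-- The Euclidean Laplacian (sum of second partial derivatives) on `ℝ^N`. -/
def lap {N : ℕ} (f : (Fin N → ℝ) → ℝ) (x : Fin N → ℝ) : ℝ :=
  ∑ i : Fin N, pd i (pd i f) x

section Aux
open Function Set

-- line map facts
lemma update_eq_add_smul {N : ℕ} (x : Fin N → ℝ) (i : Fin N) (t : ℝ) :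
    Function.update x i t = x + (t - x i) • (Pi.single i 1 : Fin N → ℝ) := by
  funext j
  by_cases h : j = i
  · subst h; simp
  · simp [Function.update_of_ne h, Pi.single_apply, h]

lemma hasDerivAt_line {N : ℕ} (x : Fin N → ℝ) (i : Fin N) (t : ℝ) :
    HasDerivAt (fun s : ℝ => Function.update x i s) ((Pi.single i 1 : Fin N → ℝ)) t := by
  have : HasDerivAt (fun s : ℝ => x + (s - x i) • (Pi.single i 1 : Fin N → ℝ))
      ((1:ℝ) • (Pi.single i 1 : Fin N → ℝ)) t :=
    (((hasDerivAt_id t).sub_const (x i)).smul_const _).const_add x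
  simpa [funext fun s => update_eq_add_smul x i s] using this

lemma hasDerivAt_comp_update {N : ℕ} {f : (Fin N → ℝ) → ℝ} {x : Fin N → ℝ}
    (i : Fin N) (hf : DifferentiableAt ℝ f x) :
    HasDerivAt (fun t : ℝ => f (Function.update x i t))
      (fderiv ℝ f x ((Pi.single i 1 : Fin N → ℝ))) (x i) := by
  have h1 := hasDerivAt_line x i (x i)
  have h2 : HasFDerivAt f (fderiv ℝ f x) (Function.update x i (x i)) := by
    rw [Function.update_eq_self]; exact hf.hasFDerivAt
  exact h2.comp_hasDerivAt (x i) h1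

lemma pd_eq_fderiv {N : ℕ} {f : (Fin N → ℝ) → ℝ} {x : Fin N → ℝ}
    (i : Fin N) (hf : DifferentiableAt ℝ f x) :
    pd i f x = fderiv ℝ f x ((Pi.single i 1 : Fin N → ℝ)) :=
  (hasDerivAt_comp_update i hf).deriv

lemma pd_congr_nhds {N : ℕ} {f g : (Fin N → ℝ) → ℝ} {x : Fin N → ℝ}
    (i : Fin N) (h : f =ᶠ[nhds x] g) : pd i f x = pd i g x := by
  have hc : ContinuousAt (fun t : ℝ => Function.update x i t) (x i) :=
    (hasDerivAt_line x i (x i)).continuousAt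
  have : (fun t : ℝ => f (Function.update x i t)) =ᶠ[nhds (x i)]
      (fun t : ℝ => g (Function.update x i t)) := by
    have hmem : {y | f y = g y} ∈ nhds ((fun t : ℝ => Function.update x i t) (x i)) := by
      show {y | f y = g y} ∈ nhds (Function.update x i (x i)); rw [Function.update_eq_self]; exact h
    have := hc.preimage_mem_nhds hmem
    filter_upwards [this] with t ht using ht
  exact this.deriv_eq

-- support of pd
lemma pd_eq_zero_of_not_mem_tsupport {N : ℕ} {f : (Fin N → ℝ) → ℝ} {x : Fin N → ℝ}
    (i : Fin N) (hx : x ∉ tsupport f) : pd i f x = 0 := by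
  have h : f =ᶠ[nhds x] (fun _ => (0:ℝ)) := by
    have : (tsupport f)ᶜ ∈ nhds x := (isClosed_tsupport f).isOpen_compl.mem_nhds hx
    filter_upwards [this] with y hy using image_eq_zero_of_notMem_tsupport hy
  rw [pd_congr_nhds i h]
  simp [pd]



lemma integral_deriv_eq_zero_1d (h : ℝ → ℝ) (hh : ContDiff ℝ 1 h)
    (hc : HasCompactSupport h) : ∫ t : ℝ, deriv h t = 0 := by
  obtain ⟨R, hR⟩ := hc.isBounded.subset_closedBall 0
  set R' : ℝ := max R 0 with hR'
  have h0 : (0:ℝ) ≤ R' := le_max_right R 0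
  have hsub : tsupport h ⊆ Set.Icc (-(R' + 1) + 1) (R' + 1 - 1) := by
    intro x hx
    have := hR hx
    rw [Real.closedBall_eq_Icc] at this
    have h1 : R ≤ R' := le_max_left R 0
    constructor <;> [linarith [this.1]; linarith [this.2]]
  set a : ℝ := -(R' + 1)
  set b : ℝ := R' + 1
  have hab : a ≤ b := by simp only [a, b]; linarith
  have hna : h a = 0 := by
    apply image_eq_zero_of_notMem_tsupport
    intro hx; have := hsub hx; simp only [a, Set.mem_Icc] at this; linarith [this.1]
  have hnb : h b = 0 := by
    apply image_eq_zero_of_notMem_tsupport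
    intro hx; have := hsub hx; simp only [b, Set.mem_Icc] at this; linarith [this.2]
  have step1 : ∫ t : ℝ, deriv h t = ∫ t in Set.Ioc a b, deriv h t := by
    refine (setIntegral_eq_integral_of_forall_compl_eq_zero fun x hx => ?_).symm
    apply notMem_support.mp
    intro hs
    apply hx
    have := hsub (support_deriv_subset hs)
    simp only [Set.mem_Icc] at this
    exact ⟨by linarith [this.1], by linarith [this.2]⟩
  rw [step1, ← intervalIntegral.integral_of_le hab,
    intervalIntegral.integral_deriv_eq_sub (fun x _ => (hh.differentiable one_ne_zero).differentiableAt)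
      ((hh.continuous_deriv le_rfl).intervalIntegrable a b), hna, hnb, sub_zero]

lemma integral_pd_eq_zero_aux {n : ℕ} (i : Fin (n + 1)) (g : (Fin (n + 1) → ℝ) → ℝ)
    (hg : ContDiff ℝ 1 g) (hgc : HasCompactSupport g) :
    (∫ x : Fin (n + 1) → ℝ, deriv (fun t : ℝ => g (Function.update x i t)) (x i)) = 0 := by
  set F : (Fin (n + 1) → ℝ) → ℝ :=
    fun x => deriv (fun t : ℝ => g (Function.update x i t)) (x i) with hF
  set e := MeasurableEquiv.piFinSuccAbove (fun _ : Fin (n + 1) => ℝ) i with he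
  have mp := volume_preserving_piFinSuccAbove (fun _ : Fin (n + 1) => ℝ) i
  have hsymm : ∀ (t : ℝ) (y : Fin n → ℝ), e.symm (t, y) = (i.insertNth t y : Fin (n+1) → ℝ) := by
    intro t y; rfl
  have hupd : ∀ (t s : ℝ) (y : Fin n → ℝ),
      Function.update (i.insertNth t y : Fin (n+1) → ℝ) i s = (i.insertNth s y : Fin (n+1) → ℝ) := by
    intro t s y
    funext j
    rcases eq_or_ne j i with rfl | hj
    · simp
    · obtain ⟨k, rfl⟩ := Fin.exists_succAbove_eq hj
      rw [Function.update_of_ne (Fin.succAbove_ne i k)]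
      simp
  have hpoint : ∀ (t : ℝ) (y : Fin n → ℝ),
      F (e.symm (t, y)) = deriv (fun s : ℝ => g ((i.insertNth s y : Fin (n+1) → ℝ))) t := by
    intro t y
    rw [hsymm]
    simp only [hF]
    rw [Fin.insertNth_apply_same]
    congr 1
    funext s
    rw [hupd]
  -- F is continuous with compact support
  have hgdiff : Differentiable ℝ g := hg.differentiable one_ne_zero
  have hFeq : F = fun x => fderiv ℝ g x (Pi.single i 1 : Fin (n+1) → ℝ) := by
    funext x
    exact (hasDerivAt_comp_update i (hgdiff x)).deriv
  have hFcont : Continuous F := by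
    rw [hFeq]
    exact (hg.continuous_fderiv one_ne_zero).clm_apply continuous_const
  have hFsupp : ∀ x ∉ tsupport g, F x = 0 := by
    intro x hx
    simp only [hFeq]
    rw [notMem_support.mp fun hs => hx (support_fderiv_subset ℝ hs)]
    rfl
  have hecont : Continuous (fun x : Fin (n+1) → ℝ => e x) := by
    have : (fun x : Fin (n+1) → ℝ => e x)
        = fun x => (x i, fun j : Fin n => x (i.succAbove j)) := rfl
    rw [this]; fun_prop
  have hesymmcont : Continuous (fun p : ℝ × (Fin n → ℝ) => e.symm p) := by
    have : (fun p : ℝ × (Fin n → ℝ) => e.symm p)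
        = fun p => (i.insertNth p.1 p.2 : Fin (n+1) → ℝ) := by funext p; rw [hsymm p.1 p.2]
    rw [this]
    apply continuous_pi
    intro j
    refine Fin.succAboveCases i ?_ ?_ j
    · simpa using continuous_fst
    · intro k
      simp only [Fin.insertNth_apply_succAbove]
      exact (continuous_apply k).comp continuous_snd
  have hcs : HasCompactSupport (fun p : ℝ × (Fin n → ℝ) => F (e.symm p)) := by
    apply HasCompactSupport.intro (hgc.image hecont)
    intro p hp
    by_contra hne
    exact hp ⟨e.symm p, by_contra fun h => hne (hFsupp _ h), e.apply_symm_apply p⟩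
  have hint : Integrable (fun p : ℝ × (Fin n → ℝ) => F (e.symm p)) :=
    (hFcont.comp hesymmcont).integrable_of_hasCompactSupport hcs
  have h1 : (∫ x, F x) = ∫ p : ℝ × (Fin n → ℝ), F (e.symm p) :=
    ((mp.symm e).integral_comp e.symm.measurableEmbedding F).symm
  rw [h1]
  rw [Measure.volume_eq_prod] at hint ⊢
  rw [integral_prod_symm _ hint]
  have hinner : ∀ y : Fin n → ℝ, (∫ t : ℝ, F (e.symm (t, y))) = 0 := by
    intro y
    have hy : ∀ t : ℝ, F (e.symm (t, y)) = deriv (fun s : ℝ => g ((i.insertNth s y : Fin (n+1) → ℝ))) t :=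
      fun t => hpoint t y
    rw [integral_congr_ae (Filter.Eventually.of_forall hy)]
    have hins : ContDiff ℝ 1 (fun s : ℝ => (i.insertNth s y : Fin (n+1) → ℝ)) := by
      apply contDiff_pi.mpr
      intro j
      refine Fin.succAboveCases i ?_ ?_ j
      · simp only [Fin.insertNth_apply_same]; exact contDiff_id
      · intro k; simpa using contDiff_const
    apply integral_deriv_eq_zero_1d _ (hg.comp hins)
    apply HasCompactSupport.intro (hgc.image (continuous_apply i))
    intro s hs
    by_contra hne
    refine hs ⟨(i.insertNth s y : Fin (n+1) → ℝ), subset_tsupport g hne, ?_⟩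
    simp
  calc (∫ y : Fin n → ℝ, ∫ t : ℝ, F (e.symm (t, y))) = ∫ _y : Fin n → ℝ, (0:ℝ) :=
        integral_congr_ae (Filter.Eventually.of_forall hinner)
    _ = 0 := integral_zero _ _

end Aux

/-- Ground-state substitution identity: if `ψ > 0` is smooth on an
open `U ⊆ ℝ^N` with `Δψ + Vψ = 0` (`V` continuous), then for every `C¹` function
`ζ` with compact support in `U`,
`∫_U ψ² |∇(ζ/ψ)|² dx = ∫_U (|∇ζ|² - V ζ²) dx`. -/
theorem stmt19 (N : ℕ) (hN : 1 ≤ N) (U : Set (Fin N → ℝ)) (hU : IsOpen U)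
    (V : (Fin N → ℝ) → ℝ) (hV : ContinuousOn V U)
    (ψ : (Fin N → ℝ) → ℝ) (hψsmooth : ContDiffOn ℝ (⊤ : ℕ∞) ψ U)
    (hψpos : ∀ x ∈ U, 0 < ψ x)
    (hψeq : ∀ x ∈ U, lap ψ x + V x * ψ x = 0)
    (ζ : (Fin N → ℝ) → ℝ) (hζ : ContDiff ℝ 1 ζ)
    (hζcpt : HasCompactSupport ζ) (hζsupp : tsupport ζ ⊆ U) :
    (∫ x in U, ψ x ^ 2 * ∑ i : Fin N, (pd i (fun z => ζ z / ψ z) x) ^ 2) =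
      ∫ x in U, ((∑ i : Fin N, (pd i ζ x) ^ 2) - V x * ζ x ^ 2) := by
  classical
  obtain ⟨n, rfl⟩ : ∃ n, N = n + 1 := ⟨N - 1, (Nat.succ_pred_eq_of_pos hN).symm⟩
  have hUm : MeasurableSet U := hU.measurableSet
  set S := tsupport ζ with hS
  have hSU : S ⊆ U := hζsupp
  have hψx : ∀ x ∈ U, ContDiffAt ℝ (⊤ : ℕ∞) ψ x := fun x hx => hψsmooth.contDiffAt (hU.mem_nhds hx)
  have hζdiff : Differentiable ℝ ζ := hζ.differentiable one_ne_zero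
  -- the fderiv representation of ∂ᵢψ
  set Φ : Fin (n + 1) → ((Fin (n + 1) → ℝ) → ℝ) :=
    fun i z => fderiv ℝ ψ z (Pi.single i 1 : Fin (n + 1) → ℝ) with hΦdef
  have hfd : ContDiffOn ℝ (⊤ : ℕ∞) (fderiv ℝ ψ) U := hψsmooth.fderiv_of_isOpen hU (by simp)
  have hΦsm : ∀ i, ContDiffOn ℝ (⊤ : ℕ∞) (Φ i) U := fun i => hfd.clm_apply contDiffOn_const
  have hΦat : ∀ i, ∀ x ∈ U, ContDiffAt ℝ (⊤ : ℕ∞) (Φ i) x :=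
    fun i x hx => (hΦsm i).contDiffAt (hU.mem_nhds hx)
  have hpdψ : ∀ i, ∀ x ∈ U, pd i ψ x = Φ i x :=
    fun i x hx => pd_eq_fderiv i ((hψx x hx).differentiableAt (by simp))
  -- global C¹ extension of (ζ²/ψ)·∂ᵢψ
  set g : Fin (n + 1) → ((Fin (n + 1) → ℝ) → ℝ) :=
    fun i x => if x ∈ U then ζ x ^ 2 / ψ x * Φ i x else 0 with hgdef
  have hgz : ∀ i, ∀ x ∉ S, g i x = 0 := by
    intro i x hx
    by_cases h : x ∈ U
    · simp [hgdef, h, image_eq_zero_of_notMem_tsupport hx]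
    · simp [hgdef, h]
  have hgU : ∀ i, ∀ x ∈ U, g i x = ζ x ^ 2 / ψ x * Φ i x := by
    intro i x hx; simp [hgdef, hx]
  have hgC1 : ∀ i, ContDiff ℝ 1 (g i) := by
    intro i
    rw [contDiff_iff_contDiffAt]
    intro x
    by_cases hx : x ∈ U
    · have heq : g i =ᶠ[nhds x] fun y => ζ y ^ 2 / ψ y * Φ i y := by
        filter_upwards [hU.mem_nhds hx] with y hy using hgU i y hy
      refine ContDiffAt.congr_of_eventuallyEq ?_ heq
      exact (((hζ.contDiffAt.pow 2).div ((hψx x hx).of_le (by simp))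
        (hψpos x hx).ne').mul ((hΦat i x hx).of_le (by simp)))
    · have hx' : x ∉ S := fun h => hx (hSU h)
      have heq : g i =ᶠ[nhds x] fun _ => (0 : ℝ) := by
        filter_upwards [(isClosed_tsupport ζ).isOpen_compl.mem_nhds hx'] with y hy
          using hgz i y hy
      exact contDiffAt_const.congr_of_eventuallyEq heq
  have hgcpt : ∀ i, HasCompactSupport (g i) :=
    fun i => HasCompactSupport.intro hζcpt (hgz i)
  have hgts : ∀ i, tsupport (g i) ⊆ S :=
    fun i => closure_minimal (fun x hx => by_contra fun h =>
      hx (hgz i x fun hs => h hs)) (isClosed_tsupport ζ)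
  -- the divergence term
  set G : (Fin (n + 1) → ℝ) → ℝ := fun x => ∑ i, pd i (g i) x with hGdef
  have hpdg_eq : ∀ i, (fun x => pd i (g i) x)
      = fun x => fderiv ℝ (g i) x (Pi.single i 1 : Fin (n + 1) → ℝ) :=
    fun i => funext fun x => pd_eq_fderiv i (((hgC1 i).differentiable one_ne_zero) x)
  have hpdg_cont : ∀ i, Continuous (fun x => pd i (g i) x) := by
    intro i
    rw [hpdg_eq i]
    exact ((hgC1 i).continuous_fderiv one_ne_zero).clm_apply continuous_const
  have hpdg_supp : ∀ i, ∀ x ∉ S, pd i (g i) x = 0 :=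
    fun i x hx => pd_eq_zero_of_not_mem_tsupport i fun h => hx (hgts i h)
  have hpdg_int : ∀ i, Integrable (fun x => pd i (g i) x) :=
    fun i => (hpdg_cont i).integrable_of_hasCompactSupport
      (HasCompactSupport.intro hζcpt (hpdg_supp i))
  have hGcont : Continuous G := by
    apply continuous_finset_sum
    intro i _
    exact hpdg_cont i
  have hGsupp : ∀ x ∉ S, G x = 0 := by
    intro x hx
    simp only [hGdef]
    exact Finset.sum_eq_zero fun i _ => hpdg_supp i x hx
  have hGint : Integrable G :=
    hGcont.integrable_of_hasCompactSupport (HasCompactSupport.intro hζcpt hGsupp)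
  have hGzero : (∫ x in U, G x) = 0 := by
    rw [setIntegral_eq_integral_of_forall_compl_eq_zero
      (fun x hx => hGsupp x fun hs => hx (hSU hs))]
    rw [hGdef]
    rw [integral_finset_sum _ (fun i _ => hpdg_int i)]
    exact Finset.sum_eq_zero fun i _ => integral_pd_eq_zero_aux i (g i) (hgC1 i) (hgcpt i)
  -- integrability of the RHS integrand on U
  have hpdζ_eq : ∀ i : Fin (n + 1), (fun x => pd i ζ x)
      = fun x => fderiv ℝ ζ x (Pi.single i 1 : Fin (n + 1) → ℝ) :=
    fun i => funext fun x => pd_eq_fderiv i (hζdiff x)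
  have hAcont : Continuous (fun x => ∑ i : Fin (n + 1), (pd i ζ x) ^ 2) := by
    apply continuous_finset_sum
    intro i _
    have hc : Continuous (fun x => pd i ζ x) := by
      rw [hpdζ_eq i]
      exact (hζ.continuous_fderiv one_ne_zero).clm_apply continuous_const
    exact hc.pow 2
  have hAint : IntegrableOn (fun x => ∑ i : Fin (n + 1), (pd i ζ x) ^ 2) U := by
    apply Integrable.integrableOn
    apply hAcont.integrable_of_hasCompactSupport
    apply HasCompactSupport.intro hζcpt
    intro x hx
    exact Finset.sum_eq_zero fun i _ => by
      rw [pd_eq_zero_of_not_mem_tsupport i hx]; ring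
  have hBint : IntegrableOn (fun x => V x * ζ x ^ 2) U := by
    have hBS : IntegrableOn (fun x => V x * ζ x ^ 2) S := by
      apply ContinuousOn.integrableOn_compact hζcpt
      exact (hV.mono hSU).mul ((hζ.continuous.pow 2).continuousOn)
    have hBdiff : IntegrableOn (fun x => V x * ζ x ^ 2) (U \ S) := by
      apply (integrableOn_zero (s := U \ S)).congr_fun ?_ (hUm.diff (isClosed_tsupport ζ).measurableSet)
      intro x hx
      have : ζ x = 0 := image_eq_zero_of_notMem_tsupport hx.2
      simp [this]
    exact ((hBS.union hBdiff).mono_set fun x hx => by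
      by_cases h : x ∈ S
      · exact Set.mem_union_left _ h
      · exact Set.mem_union_right _ ⟨hx, h⟩)
  have hFint : IntegrableOn
      (fun x => (∑ i : Fin (n + 1), (pd i ζ x) ^ 2) - V x * ζ x ^ 2) U :=
    hAint.sub hBint
  -- pointwise identity on U
  have key : ∀ x ∈ U,
      ψ x ^ 2 * ∑ i : Fin (n + 1), (pd i (fun z => ζ z / ψ z) x) ^ 2
        = ((∑ i : Fin (n + 1), (pd i ζ x) ^ 2) - V x * ζ x ^ 2) - G x := by
    intro x hx
    set p := ψ x with hp
    set z := ζ x with hz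
    have hp0 : p ≠ 0 := (hψpos x hx).ne'
    have hψdiff : DifferentiableAt ℝ ψ x := (hψx x hx).differentiableAt (by simp)
    set A : Fin (n + 1) → ℝ := fun i => pd i ζ x with hA
    set B : Fin (n + 1) → ℝ := fun i => pd i ψ x with hB
    set C : Fin (n + 1) → ℝ := fun i => pd i (pd i ψ) x with hC
    -- line derivatives
    have hζl : ∀ i, HasDerivAt (fun t => ζ (Function.update x i t)) (A i) (x i) := by
      intro i
      have hAi : A i = fderiv ℝ ζ x (Pi.single i 1 : Fin (n + 1) → ℝ) :=
        pd_eq_fderiv i (hζdiff x)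
      rw [hAi]
      exact hasDerivAt_comp_update i (hζdiff x)
    have hψl : ∀ i, HasDerivAt (fun t => ψ (Function.update x i t)) (B i) (x i) := by
      intro i
      have hBi : B i = fderiv ℝ ψ x (Pi.single i 1 : Fin (n + 1) → ℝ) :=
        pd_eq_fderiv i hψdiff
      rw [hBi]
      exact hasDerivAt_comp_update i hψdiff
    have hΦB : ∀ i, Φ i x = B i := fun i => (hpdψ i x hx).symm
    have hΦeventually : ∀ i, (Φ i) =ᶠ[nhds x] (pd i ψ) := by
      intro i
      filter_upwards [hU.mem_nhds hx] with y hy using (hpdψ i y hy).symm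
    have hΦdiff : ∀ i, DifferentiableAt ℝ (Φ i) x :=
      fun i => (hΦat i x hx).differentiableAt (by simp)
    have hΦl : ∀ i, HasDerivAt (fun t => Φ i (Function.update x i t)) (C i) (x i) := by
      intro i
      have h1 : C i = fderiv ℝ (Φ i) x (Pi.single i 1 : Fin (n + 1) → ℝ) := by
        have h2 : C i = pd i (Φ i) x := (pd_congr_nhds i (hΦeventually i)).symm
        rw [h2, pd_eq_fderiv i (hΦdiff i)]
      rw [h1]
      exact hasDerivAt_comp_update i (hΦdiff i)
    have hupdx : ∀ i : Fin (n + 1), Function.update x i (x i) = x :=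
      fun i => Function.update_eq_self i x
    have hψne : ∀ i : Fin (n + 1), ψ (Function.update x i (x i)) ≠ 0 := by
      intro i; rw [hupdx i]; exact hp0
    -- derivative of the quotient
    have hq : ∀ i : Fin (n + 1),
        pd i (fun z => ζ z / ψ z) x = (A i * p - z * B i) / p ^ 2 := by
      intro i
      have h := ((hζl i).div (hψl i) (hψne i)).deriv
      rw [hupdx i] at h
      exact h
    have hgpd : ∀ i : Fin (n + 1),
        pd i (g i) x = (2 * z * A i / p - z ^ 2 * B i / p ^ 2) * B i + z ^ 2 / p * C i := by
      intro i
      have heq : g i =ᶠ[nhds x] fun y => ζ y ^ 2 / ψ y * Φ i y := by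
        filter_upwards [hU.mem_nhds hx] with y hy using hgU i y hy
      rw [pd_congr_nhds i heq]
      have h := (((hζl i).pow 2).div (hψl i) (hψne i)).mul (hΦl i)
      rw [hupdx i] at h
      have h4 := h.deriv
      refine h4.trans ?_
      rw [hΦB i]
      have hψ0 : ψ x ≠ 0 := hp0
      simp only [Pi.pow_apply, Pi.div_apply, hupdx]
      push_cast
      field_simp
      ring
    have hCsum : (∑ i : Fin (n + 1), C i) = -(V x * p) := by
      have h := hψeq x hx
      have hl : lap ψ x = ∑ i : Fin (n + 1), C i := rfl
      rw [hl] at h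
      linarith
    have hGx : G x = (∑ i : Fin (n + 1), (2 * z * A i / p - z ^ 2 * B i / p ^ 2) * B i)
        + z ^ 2 / p * (∑ i : Fin (n + 1), C i) := by
      simp only [hGdef]
      rw [Finset.mul_sum, ← Finset.sum_add_distrib]
      exact Finset.sum_congr rfl fun i _ => hgpd i
    have hLHS : ψ x ^ 2 * ∑ i : Fin (n + 1), (pd i (fun z => ζ z / ψ z) x) ^ 2
        = ∑ i : Fin (n + 1), (A i ^ 2 - (2 * z * A i / p - z ^ 2 * B i / p ^ 2) * B i) := by
      rw [Finset.mul_sum]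
      apply Finset.sum_congr rfl
      intro i _
      rw [hq i]
      have hp2 : p ^ 2 ≠ 0 := pow_ne_zero 2 hp0
      field_simp
      ring
    have hAs : (∑ i : Fin (n + 1), (pd i ζ x) ^ 2) = ∑ i : Fin (n + 1), A i ^ 2 := rfl
    have hVz : ζ x ^ 2 = z ^ 2 := rfl
    rw [hLHS, hGx, hCsum, hAs, hVz]
    have hzv : z ^ 2 / p * -(V x * p) = -(V x * z ^ 2) := by
      field_simp
    rw [hzv, Finset.sum_sub_distrib]
    ring
  calc (∫ x in U, ψ x ^ 2 * ∑ i : Fin (n + 1), (pd i (fun z => ζ z / ψ z) x) ^ 2)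
      = ∫ x in U, (((∑ i : Fin (n + 1), (pd i ζ x) ^ 2) - V x * ζ x ^ 2) - G x) :=
        setIntegral_congr_fun hUm key
    _ = (∫ x in U, ((∑ i : Fin (n + 1), (pd i ζ x) ^ 2) - V x * ζ x ^ 2)) - ∫ x in U, G x :=
        integral_sub hFint hGint.integrableOn
    _ = ∫ x in U, ((∑ i : Fin (n + 1), (pd i ζ x) ^ 2) - V x * ζ x ^ 2) := by
        rw [hGzero, sub_zero]


end
end
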